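/- arXiv:1207.2274 — 5 statements merged into one kernel-verified Lean document; each statement's English description precedes it below -/
import Mathlib

section
/- Let n ≥ 0 and let f₁,…,fₙ,g₁,g₂ ∈ ℂ[x] be polynomials. Then Wr(Wr(f₁,…,fₙ,g₁), Wr(f₁,…,fₙ,g₂)) = Wr(f₁,…,fₙ) · Wr(f₁,…,fₙ,g₁,g₂), where for two polynomials Wr(f,g) = f·g′ − f′·g. (When n = 0 the factor Wr of the empty list is interpreted as 1.) -/
open Polynomial

/-- The Wronskian determinant of an `m`-tuple of complex polynomials:
the determinant of the `m × m` matrix whose `(i,j)` entry is the `j`-th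
derivative of the `i`-th polynomial. -/
noncomputable def Wr {m : ℕ} (f : Fin m → Polynomial ℂ) : Polynomial ℂ :=
  Matrix.det (Matrix.of fun i j : Fin m =>
    (fun p : Polynomial ℂ => Polynomial.derivative p)^[j.val] (f i))

open Matrix


lemma wrAux_deriv_prod {ι : Type*} [DecidableEq ι] (s : Finset ι) (f : ι → Polynomial ℂ) :
    derivative (∏ i ∈ s, f i) = ∑ j ∈ s, (∏ i ∈ s.erase j, f i) * derivative (f j) := by
  induction s using Finset.induction_on with
  | empty => simp
  | @insert a s ha ih =>
    rw [Finset.prod_insert ha, derivative_mul, ih, Finset.sum_insert ha, Finset.erase_insert ha,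
      Finset.mul_sum]
    congr 1
    · ring
    · refine Finset.sum_congr rfl fun j hj => ?_
      have hja : j ≠ a := fun h => ha (h ▸ hj)
      rw [Finset.erase_insert_of_ne (Ne.symm hja),
        Finset.prod_insert (fun h => ha (Finset.mem_of_mem_erase h))]
      ring

lemma wrAux_derivative_det {m : ℕ} (M : Matrix (Fin m) (Fin m) (Polynomial ℂ)) :
    derivative M.det = ∑ j, (M.updateCol j fun i => derivative (M i j)).det := by
  simp only [Matrix.det_apply']
  rw [map_sum]
  trans ∑ σ : Equiv.Perm (Fin m), ∑ j, ((Equiv.Perm.sign σ : ℤ) : Polynomial ℂ) *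
      ((∏ i ∈ Finset.univ.erase j, M (σ i) i) * derivative (M (σ j) j))
  · refine Finset.sum_congr rfl fun σ _ => ?_
    rw [derivative_mul, wrAux_deriv_prod]
    simp [Finset.mul_sum]
  · rw [Finset.sum_comm]
    refine Finset.sum_congr rfl fun j _ => Finset.sum_congr rfl fun σ _ => ?_
    congr 1
    rw [← Finset.prod_erase_mul (Finset.univ) _ (Finset.mem_univ j)]
    congr 1
    · exact Finset.prod_congr rfl fun i hi => (Matrix.updateCol_ne (Finset.ne_of_mem_erase hi)).symm
    · rw [Matrix.updateCol_self]

section DJ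
variable {R : Type*} [CommRing R] {m : ℕ}

private def djP (m : ℕ) : Fin (m+2) := (Fin.last m).castSucc
private def djQ (m : ℕ) : Fin (m+2) := Fin.last (m+1)

lemma wrAux_dj_mul (M : Matrix (Fin (m+2)) (Fin (m+2)) R) :
    M.det * (adjugate M (djP m) (djP m) * adjugate M (djQ m) (djQ m)
      - adjugate M (djP m) (djQ m) * adjugate M (djQ m) (djP m))
    = M.det * (M.det *
        (M.submatrix (fun i : Fin m => Fin.castAdd 2 i) (fun i : Fin m => Fin.castAdd 2 i)).det) := by
  classical
  set p := djP m with hp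
  set q := djQ m with hq
  have hpv : (p : ℕ) = m := rfl
  have hqv : (q : ℕ) = m + 1 := rfl
  have hpq : p ≠ q := by simp [Fin.ext_iff, hpv, hqv]
  set X : Matrix (Fin (m+2)) (Fin (m+2)) R :=
    ((1 : Matrix (Fin (m+2)) (Fin (m+2)) R).updateCol p
      (fun i => adjugate M i p)).updateCol q (fun i => adjugate M i q) with hX
  have hcp : ∀ i : Fin m, Fin.castAdd 2 i ≠ p := by
    intro i; simp [Fin.ext_iff, hpv]; omega
  have hcq : ∀ i : Fin m, Fin.castAdd 2 i ≠ q := by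
    intro i; simp [Fin.ext_iff, hqv]; omega
  have hnp : Fin.natAdd m (0 : Fin 2) = p := by simp [Fin.ext_iff, hpv]
  have hnq : Fin.natAdd m (1 : Fin 2) = q := by simp [Fin.ext_iff, hqv]
  set rr : Fin 2 → Fin (m+2) := ![p, q] with hrr
  have hrrv : ∀ j : Fin 2, Fin.natAdd m j = rr j := by
    intro j; fin_cases j
    · simpa [hrr] using hnp
    · simpa [hrr] using hnq
  have e := finSumFinEquiv (m := m) (n := 2)
  -- det X
  have hXdet : X.det = adjugate M p p * adjugate M q q - adjugate M p q * adjugate M q p := by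
    rw [← Matrix.det_submatrix_equiv_self (finSumFinEquiv (m := m) (n := 2)) X]
    have hblock : X.submatrix (finSumFinEquiv (m := m) (n := 2)) (finSumFinEquiv (m := m) (n := 2))
        = Matrix.fromBlocks 1
            (Matrix.of fun i j => adjugate M (Fin.castAdd 2 i) (rr j)) 0
            (Matrix.of fun i j => adjugate M (rr i) (rr j)) := by
      ext ij kl
      cases ij with
      | inl i =>
        cases kl with
        | inl k =>
          simp only [Matrix.submatrix_apply, finSumFinEquiv_apply_left, hX,
            Matrix.fromBlocks_apply₁₁,
            Matrix.updateCol_ne (hcq k), Matrix.updateCol_ne (hcp k)]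
          simp [Matrix.one_apply, Fin.ext_iff]
        | inr k =>
          simp only [Matrix.submatrix_apply, finSumFinEquiv_apply_left,
            finSumFinEquiv_apply_right, Matrix.fromBlocks_apply₁₂, Matrix.of_apply, hX, hrrv k]
          fin_cases k
          · simp [hrr, Matrix.updateCol_apply, hpq]
          · simp [hrr, Matrix.updateCol_apply]
      | inr i =>
        cases kl with
        | inl k =>
          simp only [Matrix.submatrix_apply, finSumFinEquiv_apply_left,
            finSumFinEquiv_apply_right, Matrix.fromBlocks_apply₂₁, hX,
            Matrix.updateCol_ne (hcq k), Matrix.updateCol_ne (hcp k)]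
          refine Matrix.one_apply_ne ?_
          simp [Fin.ext_iff]
          omega
        | inr k =>
          simp only [Matrix.submatrix_apply, finSumFinEquiv_apply_right,
            Matrix.fromBlocks_apply₂₂, Matrix.of_apply, hX, hrrv i, hrrv k]
          fin_cases k
          · simp [hrr, Matrix.updateCol_apply, hpq]
          · simp [hrr, Matrix.updateCol_apply]
    rw [hblock, Matrix.det_fromBlocks_zero₂₁, Matrix.det_one, one_mul, Matrix.det_fin_two]
    simp [hrr]
  -- entries of M * X
  have hXone : ∀ (k : Fin (m+2)) (j : Fin m), X k (Fin.castAdd 2 j) = (1 : Matrix (Fin (m+2)) (Fin (m+2)) R) k (Fin.castAdd 2 j) := by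
    intro k j
    rw [hX, Matrix.updateCol_ne (hcq j), Matrix.updateCol_ne (hcp j)]
  have hMXl : ∀ (a : Fin (m+2)) (j : Fin m), (M * X) a (Fin.castAdd 2 j) = M a (Fin.castAdd 2 j) := by
    intro a j
    rw [Matrix.mul_apply]
    simp_rw [hXone]
    rw [← Matrix.mul_apply, Matrix.mul_one]
  have hMXr : ∀ (a : Fin (m+2)) (j : Fin 2), (M * X) a (rr j) =
      (M.det • (1 : Matrix (Fin (m+2)) (Fin (m+2)) R)) a (rr j) := by
    intro a j
    have hXc : ∀ k : Fin (m+2), X k (rr j) = adjugate M k (rr j) := by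
      intro k
      fin_cases j
      · simp [hrr, hX, Matrix.updateCol_apply, hpq]
      · simp [hrr, hX, Matrix.updateCol_apply]
    rw [Matrix.mul_apply]
    simp_rw [hXc]
    rw [← Matrix.mul_apply, Matrix.mul_adjugate]
  have hMXdet : (M * X).det =
      (M.submatrix (fun i : Fin m => Fin.castAdd 2 i) (fun i : Fin m => Fin.castAdd 2 i)).det
        * (M.det * M.det) := by
    rw [← Matrix.det_submatrix_equiv_self (finSumFinEquiv (m := m) (n := 2)) (M * X)]
    have hblock : (M * X).submatrix (finSumFinEquiv (m := m) (n := 2)) (finSumFinEquiv (m := m) (n := 2))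
        = Matrix.fromBlocks
            (M.submatrix (fun i : Fin m => Fin.castAdd 2 i) (fun i : Fin m => Fin.castAdd 2 i)) 0
            (Matrix.of fun (i : Fin 2) (j : Fin m) => M (rr i) (Fin.castAdd 2 j))
            (M.det • (1 : Matrix (Fin 2) (Fin 2) R)) := by
      ext ij kl
      cases ij with
      | inl i =>
        cases kl with
        | inl k =>
          simp only [Matrix.submatrix_apply, finSumFinEquiv_apply_left, Matrix.fromBlocks_apply₁₁]
          exact hMXl _ _
        | inr k =>
          simp only [Matrix.submatrix_apply, finSumFinEquiv_apply_left,
            finSumFinEquiv_apply_right, Matrix.fromBlocks_apply₁₂, hrrv k]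
          rw [hMXr]
          simp only [Matrix.smul_apply, Matrix.zero_apply]
          rw [Matrix.one_apply_ne, smul_zero]
          fin_cases k
          · simpa [hrr] using hcp i
          · simpa [hrr] using hcq i
      | inr i =>
        cases kl with
        | inl k =>
          simp only [Matrix.submatrix_apply, finSumFinEquiv_apply_left,
            finSumFinEquiv_apply_right, Matrix.fromBlocks_apply₂₁, Matrix.of_apply, hrrv i]
          exact hMXl _ _
        | inr k =>
          simp only [Matrix.submatrix_apply, finSumFinEquiv_apply_right,
            Matrix.fromBlocks_apply₂₂, hrrv i, hrrv k]
          rw [hMXr]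
          simp only [Matrix.smul_apply, smul_eq_mul]
          congr 1
          have hinj : rr i = rr k ↔ i = k := by
            fin_cases i <;> fin_cases k <;>
              simp [hrr, Fin.ext_iff, hpv, hqv]
          by_cases h : i = k
          · subst h; simp
          · rw [Matrix.one_apply_ne (fun hh => h (hinj.mp hh)), Matrix.one_apply_ne h]
    rw [hblock, Matrix.det_fromBlocks_zero₁₂, Matrix.det_smul, Matrix.det_one]
    simp [Fintype.card_fin, sq]
  calc M.det * (adjugate M p p * adjugate M q q - adjugate M p q * adjugate M q p)
      = M.det * X.det := by rw [hXdet]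
    _ = (M * X).det := (Matrix.det_mul M X).symm
    _ = _ := by rw [hMXdet]; ring

lemma wrAux_dj_adj (M : Matrix (Fin (m+2)) (Fin (m+2)) R) :
    adjugate M (djP m) (djP m) * adjugate M (djQ m) (djQ m)
      - adjugate M (djP m) (djQ m) * adjugate M (djQ m) (djP m)
    = M.det *
      (M.submatrix (fun i : Fin m => Fin.castAdd 2 i) (fun i : Fin m => Fin.castAdd 2 i)).det := by
  have key : ∀ (A : Matrix (Fin (m+2)) (Fin (m+2)) (MvPolynomial (Fin (m+2) × Fin (m+2)) ℤ)),
      A = mvPolynomialX (Fin (m+2)) (Fin (m+2)) ℤ →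
      adjugate A (djP m) (djP m) * adjugate A (djQ m) (djQ m)
        - adjugate A (djP m) (djQ m) * adjugate A (djQ m) (djP m)
      = A.det *
        (A.submatrix (fun i : Fin m => Fin.castAdd 2 i) (fun i : Fin m => Fin.castAdd 2 i)).det := by
    rintro A rfl
    exact mul_left_cancel₀ (Matrix.det_mvPolynomialX_ne_zero _ ℤ) (wrAux_dj_mul _)
  have hgen := key _ rfl
  have h2 := congrArg (MvPolynomial.aeval fun pr : Fin (m+2) × Fin (m+2) =>
    M pr.1 pr.2 : MvPolynomial (Fin (m+2) × Fin (m+2)) ℤ →ₐ[ℤ] R) hgen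
  set φ : MvPolynomial (Fin (m+2) × Fin (m+2)) ℤ →ₐ[ℤ] R :=
    MvPolynomial.aeval fun pr : Fin (m+2) × Fin (m+2) => M pr.1 pr.2 with hφ
  have hA : φ.mapMatrix (mvPolynomialX (Fin (m+2)) (Fin (m+2)) ℤ) = M :=
    Matrix.mvPolynomialX_mapMatrix_aeval ℤ M
  have hadjM : φ.mapMatrix (adjugate (mvPolynomialX (Fin (m+2)) (Fin (m+2)) ℤ)) = adjugate M := by
    rw [AlgHom.map_adjugate, hA]
  have hadj : ∀ i j, φ (adjugate (mvPolynomialX (Fin (m+2)) (Fin (m+2)) ℤ) i j)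
      = adjugate M i j := by
    intro i j
    have h := congrFun (congrFun hadjM i) j
    simpa [AlgHom.mapMatrix_apply, Matrix.map_apply] using h
  have hdet : φ (mvPolynomialX (Fin (m+2)) (Fin (m+2)) ℤ).det = M.det := by
    rw [AlgHom.map_det, hA]
  have hsub : φ ((mvPolynomialX (Fin (m+2)) (Fin (m+2)) ℤ).submatrix
        (fun i : Fin m => Fin.castAdd 2 i) (fun i : Fin m => Fin.castAdd 2 i)).det
      = (M.submatrix (fun i : Fin m => Fin.castAdd 2 i) (fun i : Fin m => Fin.castAdd 2 i)).det := by
    rw [AlgHom.map_det]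
    congr 1
    rw [AlgHom.mapMatrix_apply] at hA
    show ((mvPolynomialX (Fin (m+2)) (Fin (m+2)) ℤ).submatrix _ _).map φ = _
    rw [← Matrix.submatrix_map, hA]
  simpa [_root_.map_mul, map_sub, hadj, hdet, hsub] using h2

lemma wrAux_dj (M : Matrix (Fin (m+2)) (Fin (m+2)) R) :
    (M.submatrix (djP m).succAbove (djP m).succAbove).det
      * (M.submatrix (djQ m).succAbove (djQ m).succAbove).det
    - (M.submatrix (djQ m).succAbove (djP m).succAbove).det
      * (M.submatrix (djP m).succAbove (djQ m).succAbove).det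
    = M.det *
      (M.submatrix (fun i : Fin m => Fin.castAdd 2 i) (fun i : Fin m => Fin.castAdd 2 i)).det := by
  have h := wrAux_dj_adj M
  rw [Matrix.adjugate_fin_succ_eq_det_submatrix, Matrix.adjugate_fin_succ_eq_det_submatrix,
    Matrix.adjugate_fin_succ_eq_det_submatrix, Matrix.adjugate_fin_succ_eq_det_submatrix] at h
  have e1 : ((djP m : ℕ)) = m := rfl
  have e2 : ((djQ m : ℕ)) = m + 1 := rfl
  rw [e1, e2] at h
  have s1 : ((-1 : R)) ^ (m + m) = 1 := Even.neg_one_pow ⟨m, rfl⟩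
  have s2 : ((-1 : R)) ^ (m + 1 + (m + 1)) = 1 := Even.neg_one_pow ⟨m + 1, rfl⟩
  have s3 : ((-1 : R)) ^ (m + 1 + m) = -1 := Odd.neg_one_pow ⟨m, by ring⟩
  have s4 : ((-1 : R)) ^ (m + (m + 1)) = -1 := Odd.neg_one_pow ⟨m, by ring⟩
  rw [s1, s2, s3, s4] at h
  linear_combination h

end DJ

lemma wrAux_deriv_wr {m : ℕ} (u : Fin (m+1) → Polynomial ℂ) :
    derivative (Wr u) = ((Matrix.of fun i (j : Fin (m+1)) =>
      (fun p : Polynomial ℂ => derivative p)^[j.val] (u i)).updateCol (Fin.last m)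
      (fun i => (fun p : Polynomial ℂ => derivative p)^[m+1] (u i))).det := by
  rw [show Wr u = (Matrix.of fun i (j : Fin (m+1)) =>
    (fun p : Polynomial ℂ => derivative p)^[j.val] (u i)).det from rfl]
  rw [wrAux_derivative_det]
  refine (Finset.sum_eq_single_of_mem (Fin.last m) (Finset.mem_univ _) ?_).trans ?_
  · intro j _ hj
    have hjv : (j : ℕ) < m := by
      have h2 := j.isLt
      rcases Nat.lt_or_ge j.val m with h | h
      · exact h
      · exact absurd (Fin.ext (by simp only [Fin.val_last]; omega : (j : ℕ) = (Fin.last m : ℕ))) hj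
    apply Matrix.det_zero_of_column_eq (i := j) (j := (⟨j.val + 1, by omega⟩ : Fin (m+1)))
      (by simp [Fin.ext_iff])
    intro k
    rw [Matrix.updateCol_self, Matrix.updateCol_ne (by simp [Fin.ext_iff] : _)]
    show derivative ((fun p : Polynomial ℂ => derivative p)^[j.val] (u k))
      = (fun p : Polynomial ℂ => derivative p)^[j.val + 1] (u k)
    rw [Function.iterate_succ_apply']
  · congr 1
    refine congrArg _ (funext fun i => ?_)
    show derivative ((fun p : Polynomial ℂ => derivative p)^[(Fin.last m : ℕ)] (u i)) = _
    exact (Function.iterate_succ_apply' (fun p : Polynomial ℂ => derivative p) m (u i)).symm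


/-- For polynomials `f₁,…,fₙ,g₁,g₂ ∈ ℂ[x]`,
`Wr(Wr(f₁,…,fₙ,g₁), Wr(f₁,…,fₙ,g₂)) = Wr(f₁,…,fₙ) · Wr(f₁,…,fₙ,g₁,g₂)`,
where for two polynomials `Wr(f,g) = f·g′ − f′·g`. -/
theorem wronskian_identity (n : ℕ) (f : Fin n → Polynomial ℂ) (g₁ g₂ : Polynomial ℂ) :
    Wr (Fin.snoc f g₁) * Polynomial.derivative (Wr (Fin.snoc f g₂))
      - Polynomial.derivative (Wr (Fin.snoc f g₁)) * Wr (Fin.snoc f g₂)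
      = Wr f * Wr (Fin.snoc (Fin.snoc f g₁) g₂) := by
  classical
  set h : Fin (n+2) → Polynomial ℂ := Fin.snoc (Fin.snoc f g₁) g₂ with hh
  set W : Matrix (Fin (n+2)) (Fin (n+2)) (Polynomial ℂ) :=
    Matrix.of fun i j => (fun p : Polynomial ℂ => derivative p)^[j.val] (h i) with hW
  have hq_sA : (djQ n).succAbove = Fin.castSucc := Fin.succAbove_last
  have hp_lt : ∀ j : Fin (n+1), (j : ℕ) < n → (djP n).succAbove j = j.castSucc := by
    intro j hj
    exact Fin.succAbove_of_castSucc_lt _ _ (by simpa [Fin.lt_def, djP] using hj)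
  have hp_last : (djP n).succAbove (Fin.last n) = Fin.last (n+1) := by
    show (Fin.last n).castSucc.succAbove (Fin.last n) = Fin.last (n+1)
    rw [Fin.succAbove_of_le_castSucc _ _ (le_of_eq rfl), Fin.succ_last]
  have hrow1 : ∀ i : Fin (n+1), h i.castSucc = (Fin.snoc f g₁ : Fin (n+1) → Polynomial ℂ) i := by
    intro i; simp [hh]
  have hrow2 : ∀ i : Fin (n+1), h ((djP n).succAbove i) = (Fin.snoc f g₂ : Fin (n+1) → Polynomial ℂ) i := by
    intro i
    induction i using Fin.lastCases with
    | last => rw [hp_last]; simp [hh]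
    | cast i' =>
      rw [hp_lt _ (by simp)]
      simp [hh]
  have E2 : Wr (Fin.snoc f g₁) = (W.submatrix (djQ n).succAbove (djQ n).succAbove).det := by
    unfold Wr
    congr 1
    ext i j
    simp [hW, hq_sA, hrow1]
  have E3 : Wr (Fin.snoc f g₂) = (W.submatrix (djP n).succAbove (djQ n).succAbove).det := by
    unfold Wr
    congr 1
    ext i j
    simp [hW, hq_sA, hrow2]
  have E4 : Wr f = (W.submatrix (fun i : Fin n => Fin.castAdd 2 i)
      (fun i : Fin n => Fin.castAdd 2 i)).det := by
    unfold Wr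
    congr 1
    ext i j
    have hcc : (Fin.castAdd 2 i : Fin (n+2)) = (i.castSucc.castSucc) := rfl
    simp [hW, hcc, hh]
  have E5 : derivative (Wr (Fin.snoc f g₁)) = (W.submatrix (djQ n).succAbove
      (djP n).succAbove).det := by
    rw [wrAux_deriv_wr]
    congr 1
    ext i j
    by_cases hj : (j : ℕ) < n
    · rw [Matrix.updateCol_ne (show j ≠ Fin.last n from fun hc => by
        rw [hc] at hj; simp at hj)]
      simp [hW, hq_sA, hp_lt _ hj, hrow1]
    · have hj' : j = Fin.last n := Fin.ext (by have := j.isLt; simp only [Fin.val_last]; omega)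
      subst hj'
      rw [Matrix.updateCol_self]
      simp [hW, hq_sA, hp_last, hrow1]
  have E6 : derivative (Wr (Fin.snoc f g₂)) = (W.submatrix (djP n).succAbove
      (djP n).succAbove).det := by
    rw [wrAux_deriv_wr]
    congr 1
    ext i j
    by_cases hj : (j : ℕ) < n
    · rw [Matrix.updateCol_ne (show j ≠ Fin.last n from fun hc => by
        rw [hc] at hj; simp at hj)]
      simp [hW, hp_lt _ hj, hrow2]
    · have hj' : j = Fin.last n := Fin.ext (by have := j.isLt; simp only [Fin.val_last]; omega)
      subst hj'
      rw [Matrix.updateCol_self]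
      simp [hW, hp_last, hrow2]
  rw [E5, E6, E2, E3, E4, show Wr h = W.det from rfl]
  linear_combination wrAux_dj W
end

section
/- Fix integers 0 ≤ k ≤ s and polynomials g₁,…,g_{s+1} ∈ ℂ[x]. For i = s−k+1,…,s+1 set V(i) = Wr(g₁,…,g_{s−k}, g_i). Then Wr(V(s−k+1), V(s−k+2), …, V(s+1)) = (Wr(g₁,…,g_{s−k}))^k · Wr(g₁,…,g_{s+1}). -/
open Polynomial

/-! Over a differential field, for `f ≠ 0` one has `Wr(f, v) = f^(l+1) Wr((v/f)′)` and
`(x/f)′ = Wr(f, x)/f²`, which together give the case of a single `g`: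
`Wr(Wr(f, u₀), …, Wr(f, u_m)) = f^m Wr(f, u)`. Applying this to every function at once turns
the Wronskians in the general identity, all of which start with `f = g₁`, into Wronskians of
the functions `Wr(f, ·)` with one entry fewer, so the general case follows by induction on the
number of `g`'s. Polynomials are handled inside their fraction field, to which the derivative
extends because a localization is formally étale. -/

open Finset

theorem Fin.comp_append {α β : Type*} (F : α → β) {m n : ℕ} (u : Fin m → α)
    (v : Fin n → α) : F ∘ Fin.append u v = Fin.append (F ∘ u) (F ∘ v) := by
  ext i
  refine Fin.addCases (fun i => ?_) (fun i => ?_) i <;> simp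

namespace Derivation

section CommRing

variable {R A : Type*} [CommRing R] [CommRing A] [Algebra R A] (D : Derivation R A A)

theorem iterate_leibniz (a b : A) (n : ℕ) :
    (⇑D)^[n] (a * b) =
      ∑ ij ∈ antidiagonal n, n.choose ij.1 • ((⇑D)^[ij.1] a * (⇑D)^[ij.2] b) := by
  induction n with
  | zero => simp
  | succ n ih =>
    rw [sum_antidiagonal_choose_succ_nsmul (fun i j => (⇑D)^[i] a * (⇑D)^[j] b),
      Function.iterate_succ_apply', ih, map_sum, ← sum_add_distrib]
    refine sum_congr rfl fun ij hij => ?_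
    rw [Nat.choose_symm_of_eq_add (mem_antidiagonal.mp hij).symm, map_nsmul, leibniz,
      smul_add, Function.iterate_succ_apply', Function.iterate_succ_apply', smul_eq_mul,
      smul_eq_mul, mul_comm ((⇑D)^[ij.2] b)]

noncomputable def wronskian {m : ℕ} (f : Fin m → A) : A :=
  (Matrix.of fun i j : Fin m => (⇑D)^[j] (f i)).det

@[simp]
theorem wronskian_fin_zero (f : Fin 0 → A) : D.wronskian f = 1 :=
  Matrix.det_fin_zero

@[simp]
theorem wronskian_fin_one (f : Fin 1 → A) : D.wronskian f = f 0 :=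
  Matrix.det_fin_one _

theorem wronskian_comp_cast {m n : ℕ} (e : m = n) (f : Fin n → A) :
    D.wronskian (f ∘ Fin.cast e) = D.wronskian f := by
  subst e
  rfl

theorem wronskian_eq_zero_of_apply_eq_zero {m : ℕ} {f : Fin m → A} (i : Fin m)
    (hi : f i = 0) : D.wronskian f = 0 :=
  Matrix.det_eq_zero_of_row_eq_zero i fun j => by simp [hi, iterate_map_zero]

theorem wronskian_mul_left (c : A) {m : ℕ} (v : Fin m → A) :
    D.wronskian (fun i => c * v i) = c ^ m * D.wronskian v := by
  classical
  let T : Matrix (Fin m) (Fin m) A := Matrix.of fun r j =>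
    if r ≤ j then j.val.choose r • (⇑D)^[j - r] c else 0
  have hT : T.IsUpperTriangular := fun r j hjr => if_neg (not_le.mpr hjr)
  have hmul : (Matrix.of fun i j : Fin m => (⇑D)^[j] (c * v i)) =
      (Matrix.of fun i j : Fin m => (⇑D)^[j] (v i)) * T := by
    ext i j
    have hrange : (range m).filter (· ≤ j.val) = range (j + 1) := by
      ext r
      simp only [mem_filter, mem_range]
      omega
    rw [Matrix.mul_apply, Matrix.of_apply, mul_comm c, iterate_leibniz,
      Nat.sum_antidiagonal_eq_sum_range_succ
        (fun p q => j.val.choose p • ((⇑D)^[p] (v i) * (⇑D)^[q] c)),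
      ← hrange, sum_filter, ← Fin.sum_univ_eq_sum_range (fun r => if r ≤ j.val then _ else 0)]
    refine sum_congr rfl fun r _ => ?_
    simp only [Matrix.of_apply, T, mul_ite, mul_zero, mul_smul_comm, Fin.le_def]
  rw [wronskian, hmul, Matrix.det_mul, Matrix.det_of_isUpperTriangular hT, mul_comm, wronskian]
  simp [T]

theorem wronskian_cons_one {m : ℕ} (v : Fin m → A) :
    D.wronskian (Fin.cons 1 v) = D.wronskian (fun i => D (v i)) := by
  rw [wronskian, Matrix.det_succ_row_zero, sum_eq_single 0]
  · simp only [Fin.val_zero, pow_zero, Matrix.of_apply, Fin.cons_zero, Function.iterate_zero,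
      id_eq, one_mul, Fin.succAbove_zero, wronskian]
    congr 1
  · intro j _ hj
    obtain ⟨j, rfl⟩ := Fin.exists_succ_eq.mpr hj
    simp [Function.iterate_succ_apply, iterate_map_zero]
  · simp

theorem wronskian_map {S B : Type*} [CommRing S] [CommRing B] [Algebra S B]
    (D' : Derivation S B B) (φ : A →+* B) (hφ : ∀ a, φ (D a) = D' (φ a)) {m : ℕ}
    (f : Fin m → A) : φ (D.wronskian f) = D'.wronskian (φ ∘ f) := by
  rw [wronskian, RingHom.map_det, wronskian]
  congr 1
  ext i j
  exact Function.Semiconj.iterate_right hφ j (f i)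

end CommRing

section Field

variable {R K : Type*} [CommRing R] [Field K] [Algebra R K] (D : Derivation R K K)

theorem wronskian_cons_of_ne_zero {f : K} (hf : f ≠ 0) {m : ℕ} (v : Fin m → K) :
    D.wronskian (Fin.cons f v) = f ^ (m + 1) * D.wronskian (fun i => D (v i / f)) := by
  have hv : (Fin.cons f v : Fin (m + 1) → K) =
      fun i => f * (Fin.cons 1 (fun i => v i / f) : Fin (m + 1) → K) i := by
    ext i
    refine Fin.cases ?_ (fun i => ?_) i <;> simp [mul_div_cancel₀ _ hf]
  rw [hv, wronskian_mul_left, wronskian_cons_one]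

theorem wronskian_wronskian_pair (f : K) {m : ℕ} (u : Fin (m + 1) → K) :
    D.wronskian (fun i => D.wronskian ![f, u i]) = f ^ m * D.wronskian (Fin.cons f u) := by
  rcases eq_or_ne f 0 with rfl | hf
  · have hpair (x : K) : D.wronskian ![0, x] = 0 := D.wronskian_eq_zero_of_apply_eq_zero 0 rfl
    rw [D.wronskian_eq_zero_of_apply_eq_zero (f := Fin.cons 0 u) 0 rfl, mul_zero]
    exact D.wronskian_eq_zero_of_apply_eq_zero 0 (hpair (u 0))
  have hpair (x : K) : D.wronskian ![f, x] = f ^ 2 * D (x / f) := by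
    simpa using D.wronskian_cons_of_ne_zero hf ![x]
  simp only [hpair, wronskian_mul_left, wronskian_cons_of_ne_zero D hf]
  ring

-- The factor `f` makes the identity hold also for `m = 0`.
theorem mul_wronskian_wronskian_pair (f : K) {m : ℕ} (u : Fin m → K) :
    f * D.wronskian (fun i => D.wronskian ![f, u i]) = f ^ m * D.wronskian (Fin.cons f u) := by
  cases m with
  | zero => simp
  | succ m => rw [wronskian_wronskian_pair]; ring

theorem wronskian_wronskian_snoc {n m : ℕ} (g : Fin n → K) (h : Fin (m + 1) → K) :
    D.wronskian (fun i => D.wronskian (Fin.snoc g (h i))) =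
      D.wronskian g ^ m * D.wronskian (Fin.append g h) := by
  induction n generalizing h with
  | zero =>
    have hsnoc (x : K) : (Fin.snoc g x : Fin 1 → K) = ![x] := by
      ext i
      fin_cases i
      rfl
    simp [hsnoc, Fin.append_left_nil g h rfl, wronskian_comp_cast]
  | succ n ih =>
    obtain ⟨f, g, rfl⟩ : ∃ f g', g = Fin.cons f g' := ⟨_, _, (Fin.cons_self_tail g).symm⟩
    simp only [← Fin.cons_snoc_eq_snoc_cons, Fin.append_cons, wronskian_comp_cast]
    rcases eq_or_ne f 0 with rfl | hf
    · have hzero {l : ℕ} (v : Fin l → K) : D.wronskian (Fin.cons 0 v) = 0 :=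
        D.wronskian_eq_zero_of_apply_eq_zero 0 rfl
      simp only [hzero]
      rw [D.wronskian_eq_zero_of_apply_eq_zero 0 rfl, mul_zero]
    set ω : K → K := fun x => D.wronskian ![f, x]
    have hpair {l : ℕ} (v : Fin (l + 1) → K) :
        D.wronskian (ω ∘ v) = f ^ l * D.wronskian (Fin.cons f v) :=
      D.wronskian_wronskian_pair f v
    have hω {l : ℕ} (v : Fin l → K) :
        f * D.wronskian (ω ∘ v) = f ^ l * D.wronskian (Fin.cons f v) :=
      D.mul_wronskian_wronskian_pair f v
    set L := D.wronskian fun i => D.wronskian (Fin.cons f (Fin.snoc g (h i)))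
    have hrows : f ^ (n * (m + 1)) * L =
        D.wronskian (ω ∘ g) ^ m * (f ^ (n + m) * D.wronskian (Fin.cons f (Fin.append g h))) := by
      rw [pow_mul, ← wronskian_mul_left]
      simp only [← hpair, Fin.comp_snoc, Fin.comp_append]
      exact ih (ω ∘ g) (ω ∘ h)
    apply mul_left_cancel₀ (pow_ne_zero (n * (m + 1) + m) hf)
    calc f ^ (n * (m + 1) + m) * L = f ^ m * (f ^ (n * (m + 1)) * L) := by ring
      _ = (f * D.wronskian (ω ∘ g)) ^ m *
            (f ^ (n + m) * D.wronskian (Fin.cons f (Fin.append g h))) := by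
        rw [hrows]
        ring
      _ = _ := by
        rw [hω]
        ring

end Field

section Domain

variable {R A : Type*} [CommRing R] [CommRing A] [Algebra R A] (D : Derivation R A A)

-- `D` factors through `Ω[A⁄R]`, and `Ω[B⁄R] ≃ B ⊗[A] Ω[A⁄R]` for `B` formally étale.
noncomputable def extendOfFormallyEtale (B : Type*) [CommRing B] [Algebra A B] [Algebra R B]
    [IsScalarTower R A B] [Algebra.FormallyEtale A B] : Derivation R B B :=
  (((Algebra.linearMap A B).compDer D).liftKaehlerDifferential.liftBaseChange B ∘ₗ
    (KaehlerDifferential.tensorKaehlerEquivOfFormallyEtale R A B).symm.toLinearMap).compDer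
    (KaehlerDifferential.D R B)

theorem extendOfFormallyEtale_algebraMap (B : Type*) [CommRing B] [Algebra A B] [Algebra R B]
    [IsScalarTower R A B] [Algebra.FormallyEtale A B] (a : A) :
    D.extendOfFormallyEtale B (algebraMap A B a) = algebraMap A B (D a) := by
  simp [extendOfFormallyEtale,
    KaehlerDifferential.tensorKaehlerEquivOfFormallyEtale_symm_D_algebraMap]

theorem wronskian_wronskian_snoc_of_isDomain [IsDomain A] {n m : ℕ} (g : Fin n → A)
    (h : Fin (m + 1) → A) :
    D.wronskian (fun i => D.wronskian (Fin.snoc g (h i))) =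
      D.wronskian g ^ m * D.wronskian (Fin.append g h) := by
  let K := FractionRing A
  let φ := algebraMap A K
  let D' := D.extendOfFormallyEtale K
  have hφ {l : ℕ} (v : Fin l → A) : φ (D.wronskian v) = D'.wronskian (φ ∘ v) :=
    D.wronskian_map D' φ (fun a => (D.extendOfFormallyEtale_algebraMap K a).symm) v
  have hrows : φ ∘ (fun i => D.wronskian (Fin.snoc g (h i))) =
      fun i => D'.wronskian (Fin.snoc (φ ∘ g) (φ (h i))) := by
    funext i
    rw [Function.comp_apply, hφ, Fin.comp_snoc]
  apply IsFractionRing.injective A K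
  rw [map_mul, map_pow, hφ, hφ, hφ, hrows, Fin.comp_append]
  exact D'.wronskian_wronskian_snoc (φ ∘ g) (φ ∘ h)

end Domain

end Derivation

/-- Fix `0 ≤ k ≤ s` and polynomials `g₁,…,g_{s+1}`.
For `i = s−k+1,…,s+1` set `V(i) = Wr(g₁,…,g_{s−k}, g_i)`.  Then
`Wr(V(s−k+1),…,V(s+1)) = (Wr(g₁,…,g_{s−k}))^k · Wr(g₁,…,g_{s+1})`.
(Indices here are 0-based: `g i` for `i : Fin (s+1)` is `g_{i+1}`.) -/
theorem wronskian_identity_general_one (k s : ℕ) (hks : k ≤ s)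
    (g : Fin (s + 1) → Polynomial ℂ) :
    Wr (fun i : Fin (k + 1) =>
        Wr (Fin.snoc (fun j : Fin (s - k) => g ⟨j.val, by have := j.isLt; omega⟩)
          (g ⟨s - k + i.val, by have := i.isLt; omega⟩)))
      = (Wr (fun j : Fin (s - k) => g ⟨j.val, by have := j.isLt; omega⟩)) ^ k
          * Wr g := by
  have happend : Fin.append (fun j : Fin (s - k) => g ⟨j.val, by omega⟩)
      (fun i : Fin (k + 1) => g ⟨s - k + i.val, by omega⟩) = g ∘ Fin.cast (by omega) := by
    funext i
    refine Fin.addCases (fun j => ?_) (fun j => ?_) i <;> simp <;> rfl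
  -- `key` is stated for `derivative'.wronskian`, which unfolds to `Wr`.
  have key := derivative'.wronskian_wronskian_snoc_of_isDomain
    (fun j : Fin (s - k) => g ⟨j.val, by omega⟩)
    (fun i : Fin (k + 1) => g ⟨s - k + i.val, by omega⟩)
  rwa [happend, Derivation.wronskian_comp_cast] at key
end

section
/- Let y, w ∈ ℂ[x] be nonzero polynomials and let v = y′/y − w′/w be the logarithmic derivative of the rational function y/w. If the derivative of v (as a rational function) is zero, then v = 0, i.e. y′·w = y·w′, and consequently y = a·w for some nonzero constant a ∈ ℂ. -/
open Polynomial

lemma deriv_leading {p : Polynomial ℂ} (hp : p.natDegree ≠ 0) :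
    (derivative p).natDegree = p.natDegree - 1 ∧
      (derivative p).leadingCoeff = p.leadingCoeff * p.natDegree := by
  have hm : p.natDegree - 1 + 1 = p.natDegree := Nat.succ_pred_eq_of_pos (Nat.pos_of_ne_zero hp)
  have hc : (derivative p).coeff (p.natDegree - 1) = p.leadingCoeff * p.natDegree := by
    rw [coeff_derivative, ← Nat.cast_succ, hm, leadingCoeff, Nat.succ_eq_add_one, hm]
  have hp0 : p ≠ 0 := fun h => hp (by rw [h, natDegree_zero])
  have hne : (derivative p).coeff (p.natDegree - 1) ≠ 0 := by
    rw [hc]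
    exact mul_ne_zero (leadingCoeff_ne_zero.2 hp0) (Nat.cast_ne_zero.2 hp)
  have hnd : (derivative p).natDegree = p.natDegree - 1 :=
    le_antisymm (natDegree_derivative_le p) (le_natDegree_of_ne_zero hne)
  exact ⟨hnd, by rw [leadingCoeff, hnd, hc]⟩

lemma key_lemma (p q : Polynomial ℂ) (hq : q ≠ 0) (hdeg : p.degree < q.degree)
    (h : derivative p * q = p * derivative q) : p = 0 := by
  by_contra hp
  have hmn : p.natDegree < q.natDegree := (natDegree_lt_natDegree_iff hp).2 hdeg
  have hqn : q.natDegree ≠ 0 := by omega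
  have hq' : derivative q ≠ 0 := fun h0 => hqn (natDegree_eq_zero_of_derivative_eq_zero h0)
  have hp' : derivative p ≠ 0 := by
    intro h0
    rw [h0, zero_mul] at h
    rcases mul_eq_zero.1 h.symm with h1 | h1
    · exact hp h1
    · exact hq' h1
  have hpn : p.natDegree ≠ 0 := fun h0 => hp' (by rw [eq_C_of_natDegree_eq_zero h0]; simp)
  have e := congrArg leadingCoeff h
  rw [leadingCoeff_mul, leadingCoeff_mul, (deriv_leading hpn).2, (deriv_leading hqn).2] at e
  have hlp : p.leadingCoeff ≠ 0 := leadingCoeff_ne_zero.2 hp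
  have hlq : q.leadingCoeff ≠ 0 := leadingCoeff_ne_zero.2 hq
  have e2 : (p.natDegree : ℂ) * (p.leadingCoeff * q.leadingCoeff)
      = (q.natDegree : ℂ) * (p.leadingCoeff * q.leadingCoeff) := by linear_combination e
  have : (p.natDegree : ℂ) = q.natDegree :=
    mul_right_cancel₀ (mul_ne_zero hlp hlq) e2
  exact absurd (Nat.cast_injective this) hmn.ne

/-- Let `y, w ∈ ℂ[x]` be nonzero polynomials and let
`v = y′/y − w′/w` be the logarithmic derivative of `y/w`.  As a rational
function, `v = u/(y·w)` where `u = y′·w − y·w′`; since `y·w ≠ 0`, the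
derivative of `v` in `ℂ(x)` is zero if and only if
`u′·(y·w) = u·(y·w)′` (quotient rule).  If the derivative of `v` is zero,
then `v = 0`, i.e. `y′·w = y·w′`, and consequently `y = a·w` for some
nonzero constant `a ∈ ℂ`. -/
theorem logDeriv_const_of_deriv_eq_zero (y w : Polynomial ℂ) (hy : y ≠ 0) (hw : w ≠ 0)
    (hv : Polynomial.derivative (Polynomial.derivative y * w - y * Polynomial.derivative w)
            * (y * w)
        = (Polynomial.derivative y * w - y * Polynomial.derivative w)
            * Polynomial.derivative (y * w)) :
    Polynomial.derivative y * w = y * Polynomial.derivative w ∧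
      ∃ a : ℂ, a ≠ 0 ∧ y = Polynomial.C a * w := by
  have hyw : y * w ≠ 0 := mul_ne_zero hy hw
  set u := derivative y * w - y * derivative w with hu
  have hwr : u = -(wronskian y w) := by rw [wronskian]; ring
  have hdu : u.degree < (y * w).degree := by
    rw [hwr, degree_neg, degree_mul]
    exact degree_wronskian_lt_add hy hw
  have hu0 : u = 0 := key_lemma u (y * w) hyw hdu hv
  have heq : derivative y * w = y * derivative w := sub_eq_zero.1 hu0
  refine ⟨heq, ?_⟩
  by_cases hyn : y.natDegree = 0
  · obtain ⟨a, rfl⟩ := natDegree_eq_zero.1 hyn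
    have ha : a ≠ 0 := fun h => hy (by simp [h])
    have hdw : derivative w = 0 := by
      have h2 : C a * derivative w = 0 := by rw [← heq]; simp
      rcases mul_eq_zero.1 h2 with h1 | h1
      · exact absurd (by simpa using h1) ha
      · exact h1
    obtain ⟨b, rfl⟩ := natDegree_eq_zero.1 (natDegree_eq_zero_of_derivative_eq_zero hdw)
    have hb : b ≠ 0 := fun h => hw (by simp [h])
    exact ⟨a / b, div_ne_zero ha hb, by rw [← C_mul]; field_simp⟩
  · have hwn : w.natDegree ≠ 0 := by
      intro h0
      obtain ⟨b, rfl⟩ := natDegree_eq_zero.1 h0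
      have hb : b ≠ 0 := fun h => hw (by simp [h])
      have h2 : derivative y * C b = 0 := by rw [heq]; simp
      have hy' : derivative y = 0 := by
        rcases mul_eq_zero.1 h2 with h1 | h1
        · exact h1
        · exact absurd (by simpa using h1) hb
      exact hyn (natDegree_eq_zero_of_derivative_eq_zero hy')
    have hly : y.leadingCoeff ≠ 0 := leadingCoeff_ne_zero.2 hy
    have hlw : w.leadingCoeff ≠ 0 := leadingCoeff_ne_zero.2 hw
    have hmn : y.natDegree = w.natDegree := by
      have e := congrArg leadingCoeff heq
      rw [leadingCoeff_mul, leadingCoeff_mul, (deriv_leading hyn).2, (deriv_leading hwn).2] at e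
      have e2 : (y.natDegree : ℂ) * (y.leadingCoeff * w.leadingCoeff)
          = (w.natDegree : ℂ) * (y.leadingCoeff * w.leadingCoeff) := by linear_combination e
      exact Nat.cast_injective (mul_right_cancel₀ (mul_ne_zero hly hlw) e2)
    set a := y.leadingCoeff / w.leadingCoeff with ha_def
    have ha : a ≠ 0 := div_ne_zero hly hlw
    set z := y - C a * w with hz
    have hzw : derivative z * w = z * derivative w := by
      have expand : derivative z * w - z * derivative w
          = derivative y * w - y * derivative w := by
        rw [hz]; simp only [derivative_sub, derivative_C_mul]; ring
      have : derivative z * w - z * derivative w = 0 := by rw [expand, ← hu, hu0]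
      exact sub_eq_zero.1 this
    refine ⟨a, ha, ?_⟩
    have hz0 : z = 0 := by
      by_cases hzz : z = 0
      · exact hzz
      have hdz : z.degree < w.degree := by
        rw [hz]
        calc (y - C a * w).degree < y.degree := by
              apply degree_sub_lt ?_ hy ?_
              · rw [degree_C_mul ha, degree_eq_natDegree hy, degree_eq_natDegree hw, hmn]
              · rw [leadingCoeff_mul, leadingCoeff_C, ha_def]
                field_simp
          _ = w.degree := by
              rw [degree_eq_natDegree hy, degree_eq_natDegree hw, hmn]
      exact key_lemma z w hw hdz hzw
    exact eq_of_sub_eq_zero (hz ▸ hz0)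
end

section
/- Let λ = (λ₀ ≥ λ₁ ≥ … ≥ λ_n ≥ λ_{n+1} = 0) be a partition. For each index i ∈ {0,…,n} such that λ_i − 1 ≥ λ_{i+1}, let λ^i denote the derivative partition of λ at the i-th position, obtained from λ by replacing λ_i with λ_i − 1. Then ∂F_λ/∂t₁ + ∑_i F_{λ^i} = 0, where the sum is over all indices i ∈ {0,…,n} with λ_i − 1 ≥ λ_{i+1}. -/
open MvPolynomial

/-- The polynomials `h_i(t₁,t₂,…)` defined by `exp(−∑_{j≥1} t_j z^j) = ∑_{i≥0} h_i z^i`.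
Here the variable `X j : MvPolynomial ℕ ℚ` stands for `t_{j+1}`.  This is the unique
solution of the recursion obtained by differentiating the generating identity in `z`:
`(i+1)·h_{i+1} = −∑_{j=1}^{i+1} j·t_j·h_{i+1−j}`, together with `h_0 = 1`. -/
noncomputable def hSeq : ℕ → MvPolynomial ℕ ℚ
  | 0 => 1
  | i + 1 =>
      (-(((i : ℚ) + 1)))⁻¹ •
        ∑ j ∈ Finset.range (i + 1), (((j : ℚ) + 1)) • (MvPolynomial.X j * hSeq (i - j))
decreasing_by exact Nat.lt_succ_of_le (Nat.sub_le i j)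

/-- `h_n` for `n : ℤ`, with `h_n := 0` for `n < 0`. -/
noncomputable def hInt (n : ℤ) : MvPolynomial ℕ ℚ :=
  if 0 ≤ n then hSeq n.toNat else 0

/-- The Schur polynomial of a partition `lam` (a weakly decreasing, eventually zero
sequence of nonnegative integers): `F_λ = det_{i,j=0}^{n} (h_{λ_i − i + j})`, where
`n` is the least index with `λ_j = 0` for all `j > n`. -/
noncomputable def schurOf (lam : ℕ → ℕ) : MvPolynomial ℕ ℚ :=
  Matrix.det (Matrix.of fun i j : Fin (sInf {n : ℕ | ∀ m : ℕ, n < m → lam m = 0} + 1) =>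
    hInt ((lam i : ℤ) - (i : ℤ) + (j : ℤ)))

/-!
Differentiating `exp(−∑ t_j z^j)` in `t₁` multiplies it by `−z`, so `∂h_m/∂t₁ = −h_{m−1}`;
here this is derived from the recursion defining `hSeq`. Differentiating the Jacobi–Trudi
determinant row by row, the `i`-th term is `−det` of the matrix with `λ_i` lowered by one. When
`λ_i − 1 ≥ λ_{i+1}` this is `−F_{λ^i}`; otherwise `λ_i = λ_{i+1}`, and the lowered row `i`
coincides with row `i + 1`, or, for the last row, consists of `h` with negative indices only.
-/

open Finset

lemma hSeq_succ (i : ℕ) : hSeq (i + 1) = (-((i : ℚ) + 1))⁻¹ •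
    ∑ j ∈ range (i + 1), ((j : ℚ) + 1) • (X j * hSeq (i - j)) := by
  rw [hSeq]

lemma hInt_natCast (k : ℕ) : hInt k = hSeq k := by simp [hInt]

lemma hInt_of_neg {m : ℤ} (h : m < 0) : hInt m = 0 := if_neg h.not_ge

lemma sum_range_smul_X_mul_hInt (i : ℕ) :
    ∑ j ∈ range (i + 1), ((j : ℚ) + 1) • (X j * hInt (i - j)) =
      -((i : ℚ) + 1) • hInt (i + 1) := by
  have hsub : ∀ j ∈ range (i + 1), hInt (i - j) = hSeq (i - j) := fun j hj => by
    rw [← Nat.cast_sub (mem_range_succ_iff.mp hj), hInt_natCast]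
  rw [sum_congr rfl fun j hj => by rw [hsub j hj], ← Nat.cast_add_one (R := ℤ), hInt_natCast,
    hSeq_succ, smul_inv_smul₀ (neg_ne_zero.mpr (by positivity))]

lemma pderiv_hInt_natCast (k : ℕ) : pderiv 0 (hInt k) = -hInt (k - 1) := by
  induction k using Nat.strong_induction_on with
  | _ k ih =>
  obtain _ | i := k
  · simp [hInt, hSeq]
  have hlow : ∑ j ∈ range (i + 1), ((j : ℚ) + 1) • (X j * hInt (i - j - 1)) =
      -(i : ℚ) • hInt i := by
    obtain _ | i' := i
    · simp [hInt_of_neg]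
    rw [sum_range_succ, hInt_of_neg (by omega), mul_zero, smul_zero, add_zero]
    convert sum_range_smul_X_mul_hInt i' using 3 with j hj <;> push_cast <;> ring_nf
  have hterm : ∀ j ∈ range (i + 1), pderiv 0 (((j : ℚ) + 1) • (X j * hInt (i - j))) =
      (if j = 0 then hInt i else 0) - ((j : ℚ) + 1) • (X j * hInt (i - j - 1)) := by
    intro j hj
    have := ih (i - j) (by omega)
    rw [Nat.cast_sub (mem_range_succ_iff.mp hj)] at this
    rcases eq_or_ne j 0 with rfl | hj0
    · simp only [Nat.cast_zero, sub_zero] at this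
      simp [this]
      ring
    · simp [this, pderiv_X_of_ne hj0, hj0]
  have hmain : -((i : ℚ) + 1) • pderiv 0 (hInt (i + 1)) = ((i : ℚ) + 1) • hInt i := by
    rw [← Derivation.map_smul, ← sum_range_smul_X_mul_hInt, map_sum, sum_congr rfl hterm,
      sum_sub_distrib, sum_ite_eq', if_pos (by simp), hlow]
    module
  have hc : ((i : ℚ) + 1) ≠ 0 := by positivity
  rw [Nat.cast_add_one, add_sub_cancel_right, ← inv_smul_smul₀ (neg_ne_zero.mpr hc) (pderiv 0 _),
    hmain, smul_smul, inv_neg, neg_mul, inv_mul_cancel₀ hc, neg_one_smul]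

lemma pderiv_hInt (m : ℤ) : pderiv 0 (hInt m) = -hInt (m - 1) := by
  rcases le_or_gt 0 m with hm | hm
  · lift m to ℕ using hm
    exact pderiv_hInt_natCast m
  · rw [hInt_of_neg hm, hInt_of_neg (by omega), map_zero, neg_zero]

namespace Derivation

variable {R A : Type*} [CommSemiring R]

lemma leibniz_finset_prod [CommSemiring A] [Algebra R A] (D : Derivation R A A) {ι : Type*}
    [DecidableEq ι] (s : Finset ι) (f : ι → A) :
    D (∏ i ∈ s, f i) = ∑ i ∈ s, (∏ j ∈ s.erase i, f j) * D (f i) := by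
  induction s using Finset.induction with
  | empty => simp
  | insert a s ha ih =>
    have hterm : ∀ i ∈ s, (∏ j ∈ (insert a s).erase i, f j) * D (f i) =
        f a * ((∏ j ∈ s.erase i, f j) * D (f i)) := fun i hi => by
      rw [erase_insert_of_ne (ne_of_mem_of_not_mem hi ha).symm,
        prod_insert fun h => ha (mem_of_mem_erase h), mul_assoc]
    rw [prod_insert ha, leibniz, ih, sum_insert ha, erase_insert ha, sum_congr rfl hterm,
      ← mul_sum, smul_eq_mul, smul_eq_mul, add_comm]

lemma leibniz_det [CommRing A] [Algebra R A] (D : Derivation R A A) {n : Type*} [Fintype n]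
    [DecidableEq n] (M : Matrix n n A) :
    D M.det = ∑ k, (M.updateRow k fun j => D (M k j)).det := by
  simp only [Matrix.det_apply, map_sum, Matrix.updateRow_apply]
  rw [sum_comm]
  refine sum_congr rfl fun σ _ => ?_
  rw [Units.smul_def, map_zsmul, leibniz_finset_prod, smul_sum]
  conv_rhs => rw [← Equiv.sum_comp σ]
  refine sum_congr rfl fun i _ => ?_
  rw [Units.smul_def, ← mul_prod_erase univ _ (mem_univ i), if_pos rfl, mul_comm]
  congr 2
  exact prod_congr rfl fun j hj => (if_neg (σ.injective.ne (ne_of_mem_erase hj))).symm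

end Derivation

-- Integer parts, so that lowering a zero part gives `−1` rather than a truncated `0`.
noncomputable def schurMatrix (μ : ℕ → ℤ) (n : ℕ) :
    Matrix (Fin (n + 1)) (Fin (n + 1)) (MvPolynomial ℕ ℚ) :=
  Matrix.of fun i j => hInt (μ i - i + j)

lemma det_schurMatrix_succ (μ : ℕ → ℤ) (n : ℕ) (h : μ (n + 1) = 0) :
    (schurMatrix μ (n + 1)).det = (schurMatrix μ n).det := by
  have hlast : ∀ j, schurMatrix μ (n + 1) (Fin.last (n + 1)) j =
      if j = Fin.last (n + 1) then 1 else 0 := fun j => by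
    simp only [schurMatrix, Matrix.of_apply, Fin.val_last, h, zero_sub]
    split_ifs with hj
    · simp [hj, hInt, hSeq]
    · exact hInt_of_neg (by have := Fin.val_lt_last hj; omega)
  rw [Matrix.det_succ_row _ (Fin.last (n + 1)), sum_eq_single_of_mem (Fin.last (n + 1)) (mem_univ _)
    fun j _ hj => by rw [hlast, if_neg hj, mul_zero, zero_mul], hlast, if_pos rfl, mul_one,
    Fin.val_last, ← two_mul, pow_mul, neg_one_sq, one_pow, one_mul]
  congr 1
  ext i j
  simp [schurMatrix, Fin.succAbove_last]

lemma det_schurMatrix_of_le (μ : ℕ → ℤ) {n m : ℕ} (h : ∀ k, n < k → μ k = 0) (hm : n ≤ m) :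
    (schurMatrix μ m).det = (schurMatrix μ n).det := by
  induction m, hm using Nat.le_induction with
  | base => rfl
  | succ m hm ih => rw [det_schurMatrix_succ μ m (h _ (by omega)), ih]

lemma schurOf_eq_det_schurMatrix (lam : ℕ → ℕ) {n : ℕ} (hn : ∀ j, n < j → lam j = 0) :
    schurOf lam = (schurMatrix (fun i => lam i) n).det := by
  let S := {n : ℕ | ∀ m, n < m → lam m = 0}
  have hmem : sInf S ∈ S := Nat.sInf_mem ⟨n, hn⟩
  exact (det_schurMatrix_of_le (fun i => (lam i : ℤ)) (fun k hk => by simp [hmem k hk])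
    (Nat.sInf_le (s := S) hn)).symm

lemma pderiv_det_schurMatrix (μ : ℕ → ℤ) (n : ℕ) :
    pderiv 0 (schurMatrix μ n).det =
      -∑ k : Fin (n + 1), (schurMatrix (Function.update μ k (μ k - 1)) n).det := by
  rw [Derivation.leibniz_det, ← sum_neg_distrib]
  refine sum_congr rfl fun k _ => ?_
  set M := schurMatrix (Function.update μ k (μ k - 1)) n
  have hrow : (schurMatrix μ n).updateRow k (fun j => pderiv 0 (schurMatrix μ n k j)) =
      M.updateRow k ((-1 : MvPolynomial ℕ ℚ) • M k) := by
    ext i j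
    rcases eq_or_ne i k with rfl | hik
    · simp [M, schurMatrix, pderiv_hInt]
      ring_nf
    · simp [M, schurMatrix, Matrix.updateRow_ne hik, Fin.val_injective.ne hik]
  rw [hrow, Matrix.det_updateRow_smul, Matrix.updateRow_eq_self, neg_one_mul]

lemma det_schurMatrix_eq_zero_of_succ_eq (μ : ℕ → ℤ) {n k : ℕ} (hk : k < n)
    (h : μ (k + 1) = μ k + 1) : (schurMatrix μ n).det = 0 := by
  refine Matrix.det_zero_of_row_eq (i := ⟨k, by omega⟩) (j := ⟨k + 1, by omega⟩) (by simp) ?_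
  ext j
  simp only [schurMatrix, Matrix.of_apply, h]
  push_cast
  ring_nf

lemma det_schurMatrix_eq_zero_of_neg (μ : ℕ → ℤ) {n : ℕ} (h : μ n < 0) :
    (schurMatrix μ n).det = 0 :=
  Matrix.det_eq_zero_of_row_eq_zero (Fin.last n) fun j =>
    hInt_of_neg (by simp only [Fin.val_last]; omega)

lemma det_schurMatrix_update_sub_one {lam : ℕ → ℕ} (hlam : Antitone lam) {n k : ℕ}
    (hn : ∀ j, n < j → lam j = 0) (hk : k ≤ n) :
    (schurMatrix (Function.update (fun i => (lam i : ℤ)) k (lam k - 1)) n).det =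
      if lam (k + 1) + 1 ≤ lam k then schurOf (Function.update lam k (lam k - 1)) else 0 := by
  split_ifs with hdrop
  · rw [schurOf_eq_det_schurMatrix _ (n := n) fun j hj => by
      rw [Function.update_of_ne (by omega)]; exact hn j hj]
    congr
    funext i
    rcases eq_or_ne i k with rfl | hik
    · simp only [Function.update_self]
      omega
    · simp only [Function.update_of_ne hik]
  · have hflat : lam (k + 1) = lam k := le_antisymm (hlam (Nat.le_succ k)) (by omega)
    rcases hk.lt_or_eq with hk | rfl
    · refine det_schurMatrix_eq_zero_of_succ_eq _ hk ?_
      simp only [Function.update_self, Function.update_of_ne (Nat.succ_ne_self k), hflat]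
      ring
    · refine det_schurMatrix_eq_zero_of_neg _ ?_
      have := hn (k + 1) (lt_add_one k)
      simp only [Function.update_self]
      omega

/-- Let `λ = (λ₀ ≥ λ₁ ≥ … ≥ λ_n ≥ λ_{n+1} = 0)` be a partition.
For each `i ∈ {0,…,n}` with `λ_i − 1 ≥ λ_{i+1}` (equivalently `λ_{i+1} + 1 ≤ λ_i`),
let `λ^i` be the derivative partition obtained from `λ` by replacing `λ_i` with
`λ_i − 1`.  Then `∂F_λ/∂t₁ + ∑_i F_{λ^i} = 0`, the sum being over all such `i`.
(The variable `t₁` is `X 0`.) -/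
theorem schur_derivative_identity (lam : ℕ → ℕ) (hlam : Antitone lam)
    (n : ℕ) (hn : ∀ j : ℕ, n < j → lam j = 0) :
    MvPolynomial.pderiv (0 : ℕ) (schurOf lam)
      + ∑ i ∈ (Finset.range (n + 1)).filter (fun i => lam (i + 1) + 1 ≤ lam i),
          schurOf (Function.update lam i (lam i - 1))
      = 0 := by
  rw [schurOf_eq_det_schurMatrix lam hn, pderiv_det_schurMatrix,
    Fin.sum_univ_eq_sum_range fun k =>
      (schurMatrix (Function.update (fun i => (lam i : ℤ)) k (lam k - 1)) n).det, sum_filter,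
    sum_congr rfl fun k hk => det_schurMatrix_update_sub_one hlam hn (mem_range_succ_iff.mp hk),
    neg_add_cancel]
end

section
/- Fix an integer N > 1, let S be a KdV subset with leading term A, and let a ∈ A. Then the mutation S[a] = {a+1−N} ∪ (S+1) is a KdV subset, and its leading term is ((A+1) ∪ {a+1−N}) \ {a+1}. -/
/-!
Write `P = ℤ≥0`.  Shifting `S` by one is the same as comparing `S` with `P - 1 = P ∪ {-1}`
instead of `P`, so it lowers the virtual cardinal by one; adding the element `a + 1 - N`,
which is new because `a - N ∉ S`, raises it back to zero.  A KdV subset `S` has leading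
term `S \ (S + N)`, and since `S[a] + N = {a + 1} ∪ (S + N + 1)`, the set `S[a] \ (S[a] + N)`
is computed directly from `a ∈ S` and `a - N ∉ S`.
-/

/-- A subset `S ⊆ ℤ` is of virtual cardinal zero if both `S \ ℤ≥0` and `ℤ≥0 \ S`
are finite and have the same cardinality. -/
def VirtualCardZero (S : Set ℤ) : Prop :=
  (S \ {n : ℤ | 0 ≤ n}).Finite ∧ ({n : ℤ | 0 ≤ n} \ S).Finite ∧
    (S \ {n : ℤ | 0 ≤ n}).ncard = ({n : ℤ | 0 ≤ n} \ S).ncard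

/-- The shift `S + k = {s + k : s ∈ S}` of a set of integers. -/
def shiftSet (S : Set ℤ) (k : ℤ) : Set ℤ := (fun s => s + k) '' S

/-- A KdV subset (for a fixed `N`): a subset `S ⊆ ℤ` of virtual cardinal zero
such that `S + N ⊆ S`. -/
def IsKdV (N : ℕ) (S : Set ℤ) : Prop :=
  VirtualCardZero S ∧ shiftSet S N ⊆ S

/-- `A` is the leading term of the KdV subset `S`: `A` is an `N`-element set with
`S = A ∪ (S+N)` and `A ∩ (S+N) = ∅`. -/
def IsLeadingTerm (N : ℕ) (S : Set ℤ) (A : Finset ℤ) : Prop :=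
  A.card = N ∧ (↑A : Set ℤ) ∪ shiftSet S N = S ∧ (↑A : Set ℤ) ∩ shiftSet S N = ∅

/-- The mutation `S[a] = {a+1−N} ∪ (S+1)` of a KdV subset `S` at an element `a`
of its leading term. -/
def mutate (N : ℕ) (S : Set ℤ) (a : ℤ) : Set ℤ :=
  {a + 1 - (N : ℤ)} ∪ shiftSet S 1

open Set

lemma mem_shiftSet {S : Set ℤ} {k x : ℤ} : x ∈ shiftSet S k ↔ x - k ∈ S := by
  constructor
  · rintro ⟨s, hs, rfl⟩
    simpa using hs
  · exact fun h => ⟨x - k, h, sub_add_cancel x k⟩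

lemma shiftSet_sdiff (S T : Set ℤ) (k : ℤ) :
    shiftSet (S \ T) k = shiftSet S k \ shiftSet T k :=
  image_sdiff (add_left_injective k) S T

lemma ncard_shiftSet (S : Set ℤ) (k : ℤ) : (shiftSet S k).ncard = S.ncard :=
  ncard_image_of_injective S (add_left_injective k)

lemma Set.Finite.shiftSet {S : Set ℤ} (hS : S.Finite) (k : ℤ) : (shiftSet S k).Finite :=
  hS.image _

lemma Set.ncard_insert_sdiff_add {α : Type*} {X Y : Set α} {c : α} (hc : c ∉ X)
    (hXY : (X \ Y).Finite) (hYX : (Y \ X).Finite) :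
    (insert c X \ Y).ncard + (Y \ X).ncard = (X \ Y).ncard + (Y \ insert c X).ncard + 1 := by
  by_cases hcY : c ∈ Y
  · have hYX' : Y \ X = insert c (Y \ insert c X) := by
      rw [insert_sdiff_insert, insert_eq_of_mem (show c ∈ Y \ X from ⟨hcY, hc⟩)]
    rw [insert_sdiff_of_mem X hcY, hYX',
      ncard_insert_of_notMem (fun h => h.2 (mem_insert c X)) (hYX.subset (by grind))]
    ring
  · rw [insert_sdiff_of_notMem X hcY, sdiff_insert_of_notMem hcY,
      ncard_insert_of_notMem (fun h => hc h.1) hXY]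
    ring

lemma virtualCardZero_insert_shiftSet_one {S : Set ℤ} (hS : VirtualCardZero S) {c : ℤ}
    (hc : c ∉ shiftSet S 1) : VirtualCardZero (insert c (shiftSet S 1)) := by
  unfold VirtualCardZero at hS ⊢
  obtain ⟨hSP, hPS, hcard⟩ := hS
  set P : Set ℤ := {n | 0 ≤ n}
  set Q : Set ℤ := {n | -1 ≤ n}
  have hQ : Q = insert (-1) P := by
    ext n
    simp only [Q, P, mem_insert_iff, mem_ofPred_eq]
    omega
  have hQP : shiftSet Q 1 = P := by
    ext n
    simp only [mem_shiftSet, Q, P, mem_ofPred_eq]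
    omega
  have hSQ : (S \ Q).Finite := hSP.subset (by grind)
  have hQS : (Q \ S).Finite := (hPS.insert (-1)).subset (hQ ▸ insert_sdiff_subset)
  have hcardQ : (Q \ S).ncard = (S \ Q).ncard + 1 := by
    have := ncard_insert_sdiff_add (X := P) (Y := S) (c := -1) (by simp [P]) hPS hSP
    rw [← hQ] at this
    omega
  set T := shiftSet S 1
  have hTP : T \ P = shiftSet (S \ Q) 1 := by rw [← hQP, shiftSet_sdiff]
  have hPT : P \ T = shiftSet (Q \ S) 1 := by rw [← hQP, shiftSet_sdiff]
  have hTPfin : (T \ P).Finite := hTP ▸ hSQ.shiftSet 1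
  have hPTfin : (P \ T).Finite := hPT ▸ hQS.shiftSet 1
  have := ncard_insert_sdiff_add hc hTPfin hPTfin
  rw [hTP, hPT, ncard_shiftSet, ncard_shiftSet] at this
  exact ⟨(hTPfin.insert c).subset insert_sdiff_subset, hPTfin.subset (by grind), by omega⟩

lemma union_eq_and_inter_eq_empty_iff {α : Type*} {A B S : Set α} (hBS : B ⊆ S) :
    A ∪ B = S ∧ A ∩ B = ∅ ↔ A = S \ B := by
  constructor
  · rintro ⟨rfl, hAB⟩
    rw [union_sdiff_right, sdiff_eq_left.2 (disjoint_iff_inter_eq_empty.2 hAB)]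
  · rintro rfl
    exact ⟨sdiff_union_of_subset hBS, sdiff_inter_self⟩

lemma isLeadingTerm_iff {N : ℕ} {S : Set ℤ} (hS : shiftSet S N ⊆ S) {A : Finset ℤ} :
    IsLeadingTerm N S A ↔ A.card = N ∧ (A : Set ℤ) = S \ shiftSet S N := by
  rw [IsLeadingTerm, union_eq_and_inter_eq_empty_iff hS]

lemma mem_mutate {N : ℕ} {S : Set ℤ} {a x : ℤ} :
    x ∈ mutate N S a ↔ x = a + 1 - N ∨ x - 1 ∈ S := by
  rw [mutate, mem_union, mem_singleton_iff, mem_shiftSet]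

lemma mutate_eq_insert {N : ℕ} {S : Set ℤ} {a : ℤ} :
    mutate N S a = insert (a + 1 - N) (shiftSet S 1) :=
  singleton_union

lemma shiftSet_mutate_subset {N : ℕ} {S : Set ℤ} (hS : shiftSet S N ⊆ S) {a : ℤ} (ha : a ∈ S) :
    shiftSet (mutate N S a) N ⊆ mutate N S a := by
  intro x hx
  rw [mem_shiftSet, mem_mutate] at hx
  rw [mem_mutate]
  rcases hx with hx | hx
  · exact Or.inr (by rwa [show x - 1 = a by omega])
  · exact Or.inr (hS (mem_shiftSet.2 (by rwa [sub_right_comm])))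

lemma mutate_sdiff_shiftSet {N : ℕ} {S : Set ℤ} (hS : shiftSet S N ⊆ S) {a : ℤ}
    (ha : a ∈ S) (haN : a - N ∉ S) :
    mutate N S a \ shiftSet (mutate N S a) N =
      (shiftSet (S \ shiftSet S N) 1 ∪ {a + 1 - (N : ℤ)}) \ {a + 1} := by
  have hN : (N : ℤ) ≠ 0 := fun h => haN (by rwa [h, sub_zero])
  have ha2N : a - N - N ∉ S := fun h => haN (hS (mem_shiftSet.2 h))
  ext x
  simp only [mem_sdiff, mem_union, mem_singleton_iff, mem_mutate, mem_shiftSet]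
  rw [sub_right_comm x (N : ℤ) 1]
  grind

lemma Finset.card_union_singleton_sdiff_singleton {α : Type*} [DecidableEq α] {B : Finset α}
    {b c : α} (hb : b ∈ B) (hc : c ∉ B) : ((B ∪ {c}) \ {b}).card = B.card := by
  rw [union_singleton, sdiff_singleton_eq_erase, card_erase_of_mem (mem_insert_of_mem hb),
    card_insert_of_notMem hc, Nat.add_sub_cancel]

theorem mutate_isKdV_general (N : ℕ) (S : Set ℤ) (hS : IsKdV N S)
    (A : Finset ℤ) (hA : IsLeadingTerm N S A) (a : ℤ) (ha : a ∈ A) :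
    IsKdV N (mutate N S a) ∧
      IsLeadingTerm N (mutate N S a)
        ((A.image (fun x => x + 1) ∪ {a + 1 - (N : ℤ)}) \ {a + 1}) := by
  obtain ⟨hvc, hshift⟩ := hS
  obtain ⟨hcard, hAeq⟩ := (isLeadingTerm_iff hshift).1 hA
  have haS : a ∈ S ∧ a - N ∉ S := by
    have : a ∈ S \ shiftSet S N := hAeq ▸ Finset.mem_coe.2 ha
    rwa [mem_sdiff, mem_shiftSet] at this
  have hshift' := shiftSet_mutate_subset hshift haS.1
  have hnew : a + 1 - (N : ℤ) ∉ shiftSet S 1 := by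
    rw [mem_shiftSet, show a + 1 - (N : ℤ) - 1 = a - N by ring]
    exact haS.2
  refine ⟨⟨mutate_eq_insert ▸ virtualCardZero_insert_shiftSet_one hvc hnew, hshift'⟩,
    (isLeadingTerm_iff hshift').2 ⟨?_, ?_⟩⟩
  · rw [Finset.card_union_singleton_sdiff_singleton (Finset.mem_image_of_mem _ ha),
      Finset.card_image_of_injective _ (add_left_injective 1), hcard]
    have hAS : (A : Set ℤ) ⊆ S := hAeq ▸ sdiff_subset
    exact fun h => hnew (image_mono hAS (by rwa [← Finset.mem_coe, Finset.coe_image] at h))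
  · rw [mutate_sdiff_shiftSet hshift haS.1 haS.2, ← hAeq]
    push_cast
    rfl

/-- Fix `N > 1`, let `S` be a KdV subset with leading term `A`, and
let `a ∈ A`.  Then the mutation `S[a] = {a+1−N} ∪ (S+1)` is a KdV subset, and its
leading term is `((A+1) ∪ {a+1−N}) \ {a+1}`. -/
theorem mutate_isKdV (N : ℕ) (hN : 1 < N) (S : Set ℤ) (hS : IsKdV N S)
    (A : Finset ℤ) (hA : IsLeadingTerm N S A) (a : ℤ) (ha : a ∈ A) :
    IsKdV N (mutate N S a) ∧
      IsLeadingTerm N (mutate N S a)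
        ((A.image (fun x => x + 1) ∪ {a + 1 - (N : ℤ)}) \ {a + 1}) :=
  mutate_isKdV_general N S hS A hA a ha
end
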